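/- arXiv:1807.04941 — 4 statements merged into one kernel-verified Lean document; each statement's English description precedes it below -/
import Mathlib

section
/- For any two-qubit density operator ρ, the negativity satisfies N(ρ) := (‖ρ^{T_B}‖₁ − 1)/2 ≥ ⟨φ₀₀|ρ|φ₀₀⟩ − 1/2, where |φ₀₀⟩ = (|00⟩+|11⟩)/√2 and T_B denotes partial transpose on the second qubit. -/
open Matrix Kronecker
open scoped ComplexOrder
open scoped Classical in
noncomputable def msqrt {n : Type*} [Fintype n] [DecidableEq n] (A : Matrix n n ℂ) : Matrix n n ℂ :=
  if h : A.PosSemidef then h.1.eigenvectorUnitary.1 * diagonal ((↑) ∘ Real.sqrt ∘ h.1.eigenvalues) *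
    (star h.1.eigenvectorUnitary : Matrix n n ℂ) else 0
noncomputable def fid {n : Type*} [Fintype n] [DecidableEq n] (ρ σ : Matrix n n ℂ) : ℝ :=
  ((msqrt (msqrt ρ * σ * msqrt ρ)).trace).re
def IsState {n : Type*} [Fintype n] [DecidableEq n] (ρ : Matrix n n ℂ) : Prop :=
  ρ.PosSemidef ∧ ρ.trace = 1
/-- Complete positivity via Kraus decomposition. -/
def IsCP {n m : Type*} [Fintype n] [DecidableEq n] [Fintype m] [DecidableEq m]
    (Φ : Matrix n n ℂ → Matrix m m ℂ) : Prop :=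
  ∃ (k : ℕ) (K : Fin k → Matrix m n ℂ), ∀ ρ, Φ ρ = ∑ i, K i * ρ * (K i)ᴴ
/-- Partial transpose on the second qubit. -/
def ptB (ρ : Matrix (Fin 2 × Fin 2) (Fin 2 × Fin 2) ℂ) : Matrix (Fin 2 × Fin 2) (Fin 2 × Fin 2) ℂ :=
  fun p q => ρ (p.1, q.2) (q.1, p.2)
/-- Trace norm. -/
noncomputable def traceNorm {n : Type*} [Fintype n] [DecidableEq n] (A : Matrix n n ℂ) : ℝ :=
  ((msqrt (Aᴴ * A)).trace).re
/-- The Bell state (|00⟩+|11⟩)/√2 as a vector. -/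
noncomputable def φ00 : Fin 2 × Fin 2 → ℂ := fun p => if p.1 = p.2 then ((Real.sqrt 2)⁻¹ : ℝ) else 0

/-!
The partial transpose `A = ρ^{T_B}` of a state is Hermitian, and `2 ⟨φ₀₀|ρ|φ₀₀⟩ = tr (A F)` where
`F` is the swap operator, a unitary. Diagonalising `A = V diag(λ) V*` gives
`tr (A F) = ∑ λᵢ (V* F V)ᵢᵢ`, and the entries of the unitary `V* F V` have modulus at most one,
so `Re tr (A F) ≤ ∑ |λᵢ| = ‖A‖₁`.
-/

namespace Matrix

variable {n : Type*} [Fintype n] [DecidableEq n]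

open scoped MatrixOrder in
lemma PosSemidef.msqrt_eq_sqrt {A : Matrix n n ℂ} (hA : A.PosSemidef) : msqrt A = CFC.sqrt A := by
  rw [msqrt, dif_pos hA, CFC.sqrt_eq_real_sqrt A hA.nonneg, cfcₙ_eq_cfc, hA.1.cfc_eq]
  rfl

open scoped MatrixOrder in
lemma traceNorm_eq_re_trace_abs (A : Matrix n n ℂ) : traceNorm A = (CFC.abs A).trace.re := by
  rw [traceNorm, (posSemidef_conjTranspose_mul_self A).msqrt_eq_sqrt, CFC.abs, star_eq_conjTranspose]

lemma IsHermitian.trace_cfc {A : Matrix n n ℂ} (hA : A.IsHermitian) (f : ℝ → ℝ) :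
    (hA.cfc f).trace = ∑ i, (f (hA.eigenvalues i) : ℂ) := by
  simp [IsHermitian.cfc, -Unitary.conjStarAlgAut_apply]

open scoped MatrixOrder in
lemma IsHermitian.traceNorm_eq_sum_abs_eigenvalues {A : Matrix n n ℂ} (hA : A.IsHermitian) :
    traceNorm A = ∑ i, |hA.eigenvalues i| := by
  rw [traceNorm_eq_re_trace_abs, CFC.abs_eq_cfc_norm A hA.isSelfAdjoint, hA.cfc_eq, hA.trace_cfc]
  simp

lemma IsHermitian.re_trace_mul_unitary_le_traceNorm {A U : Matrix n n ℂ} (hA : A.IsHermitian)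
    (hU : U ∈ unitaryGroup n ℂ) : (A * U).trace.re ≤ traceNorm A := by
  set V : Matrix n n ℂ := (hA.eigenvectorUnitary : Matrix n n ℂ)
  set M := star V * U * V
  have hM : M ∈ unitaryGroup n ℂ :=
    mul_mem (mul_mem (Unitary.star_mem hA.eigenvectorUnitary.2) hU) hA.eigenvectorUnitary.2
  have htrace : (A * U).trace = ∑ i, (hA.eigenvalues i : ℂ) * M i i := by
    conv_lhs => rw [hA.spectral_theorem, Unitary.conjStarAlgAut_apply]
    rw [mul_assoc, mul_assoc, trace_mul_comm, mul_assoc]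
    simp [trace, M, V]
  rw [htrace, Complex.re_sum, hA.traceNorm_eq_sum_abs_eigenvalues]
  refine Finset.sum_le_sum fun i _ => ?_
  calc (↑(hA.eigenvalues i) * M i i).re ≤ ‖↑(hA.eigenvalues i) * M i i‖ := Complex.re_le_norm _
    _ = |hA.eigenvalues i| * ‖M i i‖ := by rw [norm_mul, Complex.norm_real, Real.norm_eq_abs]
    _ ≤ |hA.eigenvalues i| :=
      mul_le_of_le_one_right (abs_nonneg _) (entry_norm_bound_of_unitary hM i i)

lemma permMatrix_mem_unitaryGroup {R : Type*} [CommRing R] [StarRing R] (σ : Equiv.Perm n) :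
    σ.permMatrix R ∈ unitaryGroup n R := by
  rw [mem_unitaryGroup_iff, star_eq_conjTranspose, conjTranspose_permMatrix, ← permMatrix_mul]
  simp

lemma trace_mul_permMatrix {R : Type*} [NonAssocSemiring R] (A : Matrix n n R) (σ : Equiv.Perm n) :
    (A * σ.permMatrix R).trace = ∑ i, A i (σ.symm i) := by
  simp [trace, PEquiv.mul_toMatrix_apply, ← Equiv.toPEquiv_symm]

end Matrix

lemma Matrix.IsHermitian.ptB {ρ : Matrix (Fin 2 × Fin 2) (Fin 2 × Fin 2) ℂ} (hρ : ρ.IsHermitian) :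
    (ptB ρ).IsHermitian := by
  ext p q
  exact congrFun₂ hρ (p.1, q.2) (q.1, p.2)

noncomputable def swapMatrix : Matrix (Fin 2 × Fin 2) (Fin 2 × Fin 2) ℂ :=
  Equiv.Perm.permMatrix ℂ (Equiv.prodComm (Fin 2) (Fin 2))

lemma swapMatrix_mem_unitaryGroup : swapMatrix ∈ unitaryGroup (Fin 2 × Fin 2) ℂ :=
  permMatrix_mem_unitaryGroup _

lemma trace_ptB_mul_swapMatrix (ρ : Matrix (Fin 2 × Fin 2) (Fin 2 × Fin 2) ℂ) :
    (ptB ρ * swapMatrix).trace = ∑ a, ∑ b, ρ (a, a) (b, b) := by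
  simp [swapMatrix, trace_mul_permMatrix, ptB, Fintype.sum_prod_type]

lemma star_φ00_dotProduct_mulVec_φ00 (ρ : Matrix (Fin 2 × Fin 2) (Fin 2 × Fin 2) ℂ) :
    star φ00 ⬝ᵥ ρ *ᵥ φ00 = (∑ a, ∑ b, ρ (a, a) (b, b)) / 2 := by
  have hc : (Real.sqrt 2 : ℂ)⁻¹ * (Real.sqrt 2 : ℂ)⁻¹ = 1 / 2 := by
    rw [← mul_inv, ← Complex.ofReal_mul, Real.mul_self_sqrt zero_le_two]
    norm_num
  simp [dotProduct, mulVec, φ00, Fintype.sum_prod_type, Fin.sum_univ_two]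
  linear_combination (ρ (0, 0) (0, 0) + ρ (0, 0) (1, 1) + ρ (1, 1) (0, 0) + ρ (1, 1) (1, 1)) * hc

theorem negativity_lower_bound (ρ : Matrix (Fin 2 × Fin 2) (Fin 2 × Fin 2) ℂ)
    (hρ : IsState ρ) :
    (traceNorm (ptB ρ) - 1) / 2 ≥ (star φ00 ⬝ᵥ ρ.mulVec φ00).re - 1 / 2 := by
  have hA := hρ.1.isHermitian.ptB
  have hbell : 2 * (star φ00 ⬝ᵥ ρ *ᵥ φ00).re = (ptB ρ * swapMatrix).trace.re := by
    rw [trace_ptB_mul_swapMatrix, star_φ00_dotProduct_mulVec_φ00]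
    simp only [Complex.div_ofNat_re]
    ring
  linarith [hA.re_trace_mul_unitary_le_traceNorm swapMatrix_mem_unitaryGroup]
end

section
/- Define for p₀ ∈ (0,1] and Fᵢ ∈ [0,1] with Fᵢ² + p₀ > 1 the function g(ζ) = (Fᵢ − √((1−p₀)(1−ζ/4)))/√(p₀ ζ/4) on ζ ∈ (0,4]. Then for all ζ ∈ (0,4], g(ζ) ≥ √((p₀ + Fᵢ² − 1)/p₀), i.e. the minimum over ζ of g equals √((p₀ + Fᵢ² − 1)/p₀). -/
/-!
Put `t = ζ / 4`, `a = 1 - p₀` and `b = p₀ + Fᵢ² - 1`, so that `a, b ≥ 0` and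
`a + b = Fᵢ²`. Since `√(b / p₀) = √(b t) / √(p₀ t)`, the claim compares the numerators
`Fᵢ - √(a (1 - t))` and `√(b t)`, i.e. it says `√(a (1 - t)) + √(b t) ≤ √(a + b)`. This is
Cauchy–Schwarz for the vectors `(√a, √b)` and `(√(1 - t), √t)`, with equality when they are
parallel, at `t = b / (a + b)`.
-/

lemma sqrt_mul_one_sub_add_sqrt_mul_le_sqrt_add {a b t : ℝ} (ha : 0 ≤ a) (hb : 0 ≤ b)
    (ht₀ : 0 ≤ t) (ht₁ : t ≤ 1) :
    √(a * (1 - t)) + √(b * t) ≤ √(a + b) := by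
  have h1t : 0 ≤ 1 - t := by linarith
  rw [Real.sqrt_mul ha, Real.sqrt_mul hb, Real.le_sqrt (by positivity) (by linarith)]
  nlinarith [Real.sq_sqrt ha, Real.sq_sqrt hb, Real.sq_sqrt ht₀, Real.sq_sqrt h1t,
    sq_nonneg (√a * √t - √b * √(1 - t))]

lemma sqrt_mul_one_sub_add_sqrt_mul_eq_sqrt_add {a b : ℝ} (ha : 0 ≤ a) (hb : 0 ≤ b)
    (hab : 0 < a + b) :
    √(a * (1 - b / (a + b))) + √(b * (b / (a + b))) = √(a + b) := by
  have h1t : 1 - b / (a + b) = a / (a + b) := by field_simp; ring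
  rw [h1t, ← mul_div_assoc, ← mul_div_assoc, Real.sqrt_div' _ hab.le, Real.sqrt_div' _ hab.le,
    Real.sqrt_mul_self ha, Real.sqrt_mul_self hb, ← add_div, Real.div_sqrt]

theorem rate_fidelity_optimization (p₀ Fi : ℝ)
    (hp : p₀ ∈ Set.Ioc (0 : ℝ) 1) (hF : Fi ∈ Set.Icc (0 : ℝ) 1)
    (hreg : Fi ^ 2 + p₀ > 1) :
    (∀ ζ ∈ Set.Ioc (0 : ℝ) 4,
        (Fi - Real.sqrt ((1 - p₀) * (1 - ζ / 4))) / Real.sqrt (p₀ * ζ / 4)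
          ≥ Real.sqrt ((p₀ + Fi ^ 2 - 1) / p₀)) ∧
    (∃ ζ ∈ Set.Ioc (0 : ℝ) 4,
        (Fi - Real.sqrt ((1 - p₀) * (1 - ζ / 4))) / Real.sqrt (p₀ * ζ / 4)
          = Real.sqrt ((p₀ + Fi ^ 2 - 1) / p₀)) := by
  obtain ⟨hp₀, hp₁⟩ := hp
  set a := 1 - p₀
  set b := p₀ + Fi ^ 2 - 1
  have ha : 0 ≤ a := by linarith
  have hb : 0 < b := by linarith
  have hab : 0 < a + b := by positivity
  have hFi : √(a + b) = Fi := by rw [show a + b = Fi ^ 2 by ring, Real.sqrt_sq hF.1]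
  have hrhs (ζ : ℝ) (hζ : 0 < ζ) : √(b / p₀) = √(b * (ζ / 4)) / √(p₀ * ζ / 4) := by
    rw [← Real.sqrt_div' _ (by positivity), mul_div_assoc p₀,
      mul_div_mul_right _ _ (by positivity)]
  constructor
  · rintro ζ ⟨hζ₀, hζ₄⟩
    rw [hrhs ζ hζ₀, ge_iff_le, div_le_div_iff_of_pos_right (by positivity)]
    have := sqrt_mul_one_sub_add_sqrt_mul_le_sqrt_add ha hb.le (t := ζ / 4) (by positivity)
      (by linarith)
    linarith
  · refine ⟨4 * (b / (a + b)), ⟨by positivity, ?_⟩, ?_⟩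
    · rw [mul_le_iff_le_one_right four_pos, div_le_one hab]
      linarith
    · rw [hrhs (4 * (b / (a + b))) (by positivity), mul_div_cancel_left₀ _ four_ne_zero]
      congr 1
      have := sqrt_mul_one_sub_add_sqrt_mul_eq_sqrt_add ha hb.le hab
      linarith
end

section
/- Let p₀ ∈ (0,1], Fᵢ ∈ [0,1] with Fᵢ² + p₀ > 1, and let ζ₀ ∈ (0,4] satisfy √(p₀ ζ₀/4) · F_c ≥ Fᵢ − √((1−p₀)(1−ζ₀/4)) for some F_c ≤ 1. Then ζ₀ ≥ 4(√(p₀ Fᵢ²) − √((1−p₀)(1−Fᵢ²)))². -/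
set_option maxHeartbeats 1000000 in
theorem rate_lower_bound (p₀ Fi ζ₀ Fc : ℝ)
    (hp : p₀ ∈ Set.Ioc (0 : ℝ) 1) (hF : Fi ∈ Set.Icc (0 : ℝ) 1)
    (hreg : Fi ^ 2 + p₀ > 1)
    (hζ : ζ₀ ∈ Set.Ioc (0 : ℝ) 4)
    (hFc : Fc ≤ 1)
    (hmain : Real.sqrt (p₀ * ζ₀ / 4) * Fc ≥ Fi - Real.sqrt ((1 - p₀) * (1 - ζ₀ / 4))) :
    ζ₀ ≥ 4 * (Real.sqrt (p₀ * Fi ^ 2) - Real.sqrt ((1 - p₀) * (1 - Fi ^ 2))) ^ 2 := by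
  obtain ⟨hp0, hp1⟩ := hp
  obtain ⟨hF0, hF1⟩ := hF
  obtain ⟨hz0, hz4⟩ := hζ
  set A := Real.sqrt p₀ with hA
  set B := Real.sqrt (1 - p₀) with hB
  set t := Real.sqrt (ζ₀ / 4) with ht
  set u := Real.sqrt (1 - ζ₀ / 4) with hu
  set G := Real.sqrt (1 - Fi ^ 2) with hG
  have hA0 : 0 ≤ A := Real.sqrt_nonneg _
  have hB0 : 0 ≤ B := Real.sqrt_nonneg _
  have ht0 : 0 ≤ t := Real.sqrt_nonneg _
  have hu0 : 0 ≤ u := Real.sqrt_nonneg _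
  have hG0 : 0 ≤ G := Real.sqrt_nonneg _
  have hA2 : A ^ 2 = p₀ := Real.sq_sqrt hp0.le
  have hB2 : B ^ 2 = 1 - p₀ := Real.sq_sqrt (by linarith)
  have ht2 : t ^ 2 = ζ₀ / 4 := Real.sq_sqrt (by linarith)
  have hu2 : u ^ 2 = 1 - ζ₀ / 4 := Real.sq_sqrt (by linarith)
  have hG2 : G ^ 2 = 1 - Fi ^ 2 := Real.sq_sqrt (by nlinarith)
  have hA1 : A ≤ 1 := Real.sqrt_le_one.mpr hp1
  have e1 : Real.sqrt (p₀ * ζ₀ / 4) = A * t := by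
    rw [show p₀ * ζ₀ / 4 = p₀ * (ζ₀ / 4) by ring, Real.sqrt_mul hp0.le]
  have e2 : Real.sqrt ((1 - p₀) * (1 - ζ₀ / 4)) = B * u :=
    Real.sqrt_mul (by linarith) _
  have e3 : Real.sqrt (p₀ * Fi ^ 2) = A * Fi := by
    rw [Real.sqrt_mul hp0.le, Real.sqrt_sq hF0]
  have e4 : Real.sqrt ((1 - p₀) * (1 - Fi ^ 2)) = B * G :=
    Real.sqrt_mul (by linarith) _
  rw [e3, e4]
  rw [e1, e2] at hmain
  clear_value A B t u G
  clear hA hB ht hu hG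
  have hmain' : A * t ≥ Fi - B * u := by
    have h1 : A * t * Fc ≤ A * t * 1 :=
      mul_le_mul_of_nonneg_left hFc (mul_nonneg hA0 ht0)
    rw [mul_one] at h1
    linarith
  have hcpos : A * Fi - B * G > 0 := by
    have h : (B * G) ^ 2 < (A * Fi) ^ 2 := by
      rw [mul_pow, mul_pow, hA2, hB2, hG2]; nlinarith
    nlinarith [h, mul_nonneg hB0 hG0, mul_nonneg hA0 hF0]
  have tc : t ≥ A * Fi - B * G := by
    rcases le_or_gt Fi (A * t) with hcase | hcase
    · have h1 : A * t ≤ t := mul_le_of_le_one_left ht0 hA1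
      have h2 : A * Fi ≤ Fi := mul_le_of_le_one_left hF0 hA1
      have h3 : 0 ≤ B * G := mul_nonneg hB0 hG0
      linarith
    · have hBu2 : (B * u) ^ 2 = (1 - p₀) * (1 - ζ₀ / 4) := by rw [mul_pow, hB2, hu2]
      have hAt2 : (A * t) ^ 2 = p₀ * (ζ₀ / 4) := by rw [mul_pow, hA2, ht2]
      have hBG2 : (B * G) ^ 2 = (1 - p₀) * (1 - Fi ^ 2) := by rw [mul_pow, hB2, hG2]
      have hAF2 : (A * Fi) ^ 2 = p₀ * Fi ^ 2 := by rw [mul_pow, hA2]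
      have hsq : (B * u) ^ 2 ≥ (Fi - A * t) ^ 2 :=
        pow_le_pow_left₀ (by linarith) (by linarith) 2
      have h1 : (Fi - A * t) ^ 2 ≤ (1 - p₀) * (1 - ζ₀ / 4) := hBu2 ▸ hsq
      have h2 : Fi ^ 2 - 2 * Fi * (A * t) + p₀ * (ζ₀ / 4) ≤ (1 - p₀) * (1 - ζ₀ / 4) := by
        have e : (Fi - A * t) ^ 2 = Fi ^ 2 - 2 * Fi * (A * t) + (A * t) ^ 2 := by ring
        rw [e, hAt2] at h1; exact h1
      have key : (A * Fi - t) ^ 2 ≤ (B * G) ^ 2 := by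
        rw [hBG2]
        have e : (A * Fi - t) ^ 2 = (A * Fi) ^ 2 - 2 * Fi * (A * t) + t ^ 2 := by ring
        rw [e, hAF2, ht2]
        linarith [h2]
      by_contra hcon
      push_neg at hcon
      have hlt : B * G < A * Fi - t := by linarith
      have h5 : (B * G) ^ 2 < (A * Fi - t) ^ 2 :=
        pow_lt_pow_left₀ hlt (mul_nonneg hB0 hG0) two_ne_zero
      linarith
  have h2 : (A * Fi - B * G) ^ 2 ≤ t ^ 2 :=
    pow_le_pow_left₀ hcpos.le tc 2
  linarith [ht2, h2]
end

section
/- With U_A = e^{−iπσ_Y/4} σ_X and observables A_r(a) = cos(a)σ_X + (−1)^r sin(a)σ_Z, one has (U_A ⊗ 1) W_{π/2−a, b} (U_A† ⊗ 1) = T_A(W_{a,b}), where T_A denotes flipping the sign of A₀ in W (replacing A₀(a) by −A₀(a)). -/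
open Matrix Kronecker
def σX : Matrix (Fin 2) (Fin 2) ℂ := !![0, 1; 1, 0]
def σY : Matrix (Fin 2) (Fin 2) ℂ := !![0, -Complex.I; Complex.I, 0]
def σZ : Matrix (Fin 2) (Fin 2) ℂ := !![1, 0; 0, -1]
/-- Measurement observables A_r(a) = cos(a)σ_X + (-1)^r sin(a)σ_Z. -/
noncomputable def obs (r : Fin 2) (a : ℝ) : Matrix (Fin 2) (Fin 2) ℂ :=
  (Real.cos a : ℂ) • σX + ((-1 : ℂ) ^ (r : ℕ) * (Real.sin a : ℂ)) • σZ
/-- The CHSH operator W_{a,b} = Σ_{r,t} (-1)^{rt} A_r(a) ⊗ B_t(b). -/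
noncomputable def W (a b : ℝ) : Matrix (Fin 2 × Fin 2) (Fin 2 × Fin 2) ℂ :=
  ∑ r : Fin 2, ∑ t : Fin 2, ((-1 : ℂ) ^ ((r : ℕ) * (t : ℕ))) • (obs r a ⊗ₖ obs t b)
/-- The unitary U_A = e^{-iπσ_Y/4} σ_X. -/
noncomputable def U_A : Matrix (Fin 2) (Fin 2) ℂ :=
  NormedSpace.exp (((-(Real.pi / 4) : ℝ) * Complex.I : ℂ) • σY) * σX

/-- The ring hom ℂ →+* M₂(ℂ) sending `i` to `i • σY = !![0,1;-1,0]`. -/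
noncomputable def φ : ℂ →+* Matrix (Fin 2) (Fin 2) ℂ where
  toFun z := !![(z.re : ℂ), (z.im : ℂ); (-z.im : ℂ), (z.re : ℂ)]
  map_one' := by ext i j; fin_cases i <;> fin_cases j <;> simp [Matrix.one_apply]
  map_mul' z w := by
    ext i j; fin_cases i <;> fin_cases j <;>
      simp [Matrix.mul_apply, Fin.sum_univ_two, Complex.mul_re, Complex.mul_im] <;> ring
  map_zero' := by ext i j; fin_cases i <;> fin_cases j <;> simp
  map_add' z w := by ext i j; fin_cases i <;> fin_cases j <;> simp <;> ring

lemma φ_cont : Continuous φ := by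
  apply continuous_matrix; intro i j
  fin_cases i <;> fin_cases j <;> simp [φ] <;> fun_prop

attribute [local instance] Matrix.linftyOpNormedRing Matrix.linftyOpNormedAlgebra

/-- Explicit form of the unitary. -/
noncomputable def V : Matrix (Fin 2) (Fin 2) ℂ := ((Real.sqrt 2 / 2 : ℝ) : ℂ) • !![-1, 1; 1, 1]

lemma U_A_eq : U_A = V := by
  have harg : (((-(Real.pi / 4) : ℝ) * Complex.I : ℂ) • σY)
      = φ ((-(Real.pi / 4) : ℝ) * Complex.I) := by
    ext i j
    fin_cases i <;> fin_cases j <;>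
      simp [φ, σY, Complex.mul_re, Complex.mul_im] <;> ring_nf <;>
        simp [Complex.I_sq] <;> ring_nf
  have hval : Complex.exp (((-(Real.pi / 4) : ℝ) * Complex.I : ℂ))
      = Complex.cos (Real.pi/4) - Complex.sin (Real.pi/4) * Complex.I := by
    push_cast
    rw [Complex.exp_mul_I, Complex.cos_neg, Complex.sin_neg]
    ring
  have hexp : NormedSpace.exp (((-(Real.pi / 4) : ℝ) * Complex.I : ℂ) • σY)
      = ((Real.sqrt 2 / 2 : ℝ) : ℂ) • !![1, -1; 1, 1] := by
    rw [harg]; erw [← NormedSpace.map_exp φ φ_cont]; rw [← Complex.exp_eq_exp_ℂ, hval]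
    have hre : (Complex.cos (Real.pi/4) - Complex.sin (Real.pi/4) * Complex.I).re
        = Real.sqrt 2 / 2 := by
      rw [show ((Real.pi:ℂ)/4) = ((Real.pi/4 : ℝ):ℂ) by push_cast; ring,
        ← Complex.ofReal_cos, ← Complex.ofReal_sin]
      simp [Real.cos_pi_div_four, Real.sin_pi_div_four]
    have him : (Complex.cos (Real.pi/4) - Complex.sin (Real.pi/4) * Complex.I).im
        = -(Real.sqrt 2 / 2) := by
      rw [show ((Real.pi:ℂ)/4) = ((Real.pi/4 : ℝ):ℂ) by push_cast; ring,
        ← Complex.ofReal_cos, ← Complex.ofReal_sin]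
      simp [Real.cos_pi_div_four, Real.sin_pi_div_four]
    show !![_, _; _, _] = _
    rw [hre, him]
    ext i j; fin_cases i <;> fin_cases j <;> simp
  rw [U_A, hexp, V]
  ext i j; fin_cases i <;> fin_cases j <;>
    simp [σX, Matrix.mul_apply, Fin.sum_univ_two]

lemma sq2 : ((Real.sqrt 2 : ℝ) : ℂ) * ((Real.sqrt 2 : ℝ) : ℂ) = 2 := by
  rw [← Complex.ofReal_mul, Real.mul_self_sqrt (by norm_num)]; norm_num

lemma V_conj : Vᴴ = V := by
  ext i j; fin_cases i <;> fin_cases j <;> simp [V, Matrix.conjTranspose_apply]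

lemma key0 (a : ℝ) : V * obs 0 (Real.pi / 2 - a) * Vᴴ = -(obs 0 a) := by
  rw [V_conj]
  ext i j
  fin_cases i <;> fin_cases j <;>
  · simp [V, obs, σX, σZ, Matrix.mul_apply, Fin.sum_univ_two,
      Real.cos_pi_div_two_sub, Real.sin_pi_div_two_sub]
    push_cast
    ring_nf
    rw [show ((Real.sqrt 2 : ℝ) : ℂ)^2 = 2 by rw [sq]; exact sq2]
    ring

lemma key1 (a : ℝ) : V * obs 1 (Real.pi / 2 - a) * Vᴴ = obs 1 a := by
  rw [V_conj]
  ext i j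
  fin_cases i <;> fin_cases j <;>
  · simp [V, obs, σX, σZ, Matrix.mul_apply, Fin.sum_univ_two,
      Real.cos_pi_div_two_sub, Real.sin_pi_div_two_sub]
    push_cast
    ring_nf
    rw [show ((Real.sqrt 2 : ℝ) : ℂ)^2 = 2 by rw [sq]; exact sq2]
    ring

theorem UA_conjugation_relabels_alice (a b : ℝ) :
    (U_A ⊗ₖ (1 : Matrix (Fin 2) (Fin 2) ℂ)) * W (Real.pi / 2 - a) b
        * (U_Aᴴ ⊗ₖ (1 : Matrix (Fin 2) (Fin 2) ℂ))
      = (-(obs 0 a)) ⊗ₖ (obs 0 b + obs 1 b) + (obs 1 a) ⊗ₖ (obs 0 b - obs 1 b) := by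
  rw [U_A_eq, W]
  simp only [Fin.sum_univ_two, Fin.val_zero, Fin.val_one, Nat.zero_mul, Nat.mul_zero,
    Nat.mul_one, Nat.one_mul, pow_zero, pow_one, one_smul, neg_one_smul]
  simp only [Matrix.mul_add, Matrix.add_mul, Matrix.mul_neg, Matrix.neg_mul,
    ← Matrix.mul_kronecker_mul, Matrix.one_mul, Matrix.mul_one]
  rw [key0 a, key1 a]
  rw [sub_eq_add_neg, Matrix.kronecker_add, Matrix.kronecker_add,
    ← neg_one_smul ℂ (obs 1 b), Matrix.kronecker_smul, neg_one_smul]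
end
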